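/- (Theorem 2.3) Let H, J, K be 4×4 real matrices satisfying the Hamiltonian conditions H² = J² = K² = HJK = −E, with associated block map P. Let A ∈ ℍ^{m×m} be a nonzero quaternion matrix with rank(P(A)) = 4n for some n with 1 ≤ n ≤ m. Then there exist injective maps r, c : {1,…,n} → {1,…,m} such that the n×n submatrix B = (a_{r(s) c(t)})_{1≤s,t≤n} of A satisfies rank(P(B)) = 4n. -/

import Mathlib

open Matrix

/-- The real `4×4` matrix representation of a quaternion determined by matrices
`H, J, K` (assumed to satisfy the Hamiltonian conditions). -/
noncomputable def qRep (H J K : Matrix (Fin 4) (Fin 4) ℝ) (q : Quaternion ℝ) :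
    Matrix (Fin 4) (Fin 4) ℝ :=
  q.re • (1 : Matrix (Fin 4) (Fin 4) ℝ) + q.imI • H + q.imJ • J + q.imK • K

/-- The block real matrix representation of a quaternion matrix: the `(s,t)` block
of `pRep H J K A` is `qRep H J K (A s t)`. -/
noncomputable def pRep (H J K : Matrix (Fin 4) (Fin 4) ℝ) {m n : ℕ}
    (A : Matrix (Fin m) (Fin n) (Quaternion ℝ)) :
    Matrix (Fin m × Fin 4) (Fin n × Fin 4) ℝ :=
  Matrix.of fun p q => qRep H J K (A p.1 q.1) p.2 q.2

/-!
The Hamiltonian conditions make `qRep` an algebra homomorphism `f : ℍ → M₄(ℝ)`, and `pRep A`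
is the block matrix of `A` with `f` applied entrywise. For any division algebra `D` over a
field `𝕜` with a representation `f : D → M_d(𝕜)`, `d = dim_𝕜 D`, and any row vector `v ≠ 0`,
the map `x ↦ v f(x)` is a `𝕜`-linear isomorphism `D ≃ 𝕜^d` with `v f(x y) = (v f(x)) f(y)`.
Applied blockwise it turns `y ↦ y A` into `w ↦ w P(A)`, so `rank P(A) = d · rank_D (rows of A)`.
Choosing rows of `A` that form a `D`-basis of its row span therefore keeps `rank P(A)`.
Columns are handled the same way after transposing, which turns `f` into a representation
of `Dᵐᵒᵖ`.
-/

open Module Submodule Set Function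

variable {R A : Type*} [CommRing R] [Ring A] [Algebra R A] {H J K : A} in
def QuaternionAlgebra.Basis.ofHamilton (hH : H * H = -1) (hJ : J * J = -1) (hK : K * K = -1)
    (hHJK : H * J * K = -1) : QuaternionAlgebra.Basis A (-1 : R) 0 (-1) where
  i := H
  j := J
  k := K
  i_mul_i := by rw [hH]; simp
  j_mul_j := by rw [hJ]; simp
  i_mul_j := calc
    H * J = -(H * J * K * K) := by rw [mul_assoc _ K, hK]; noncomm_ring
    _ = K := by rw [hHJK]; noncomm_ring
  j_mul_i := by
    have hJK : J * K = H := calc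
      J * K = -(H * H) * J * K := by rw [hH]; noncomm_ring
      _ = -H * (H * J * K) := by noncomm_ring
      _ = H := by rw [hHJK]; noncomm_ring
    calc J * H = J * J * K := by rw [← hJK]; noncomm_ring
      _ = (0 : R) • J - K := by rw [hJ]; simp

section
variable {H J K : Matrix (Fin 4) (Fin 4) ℝ}
  (hH : H * H = -1) (hJ : J * J = -1) (hK : K * K = -1) (hHJK : H * J * K = -1)

noncomputable def qRepAlgHom : Quaternion ℝ →ₐ[ℝ] Matrix (Fin 4) (Fin 4) ℝ :=
  (QuaternionAlgebra.Basis.ofHamilton hH hJ hK hHJK).liftHom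

theorem qRepAlgHom_apply (q : Quaternion ℝ) : qRepAlgHom hH hJ hK hHJK q = qRep H J K q := by
  show QuaternionAlgebra.Basis.lift _ q = _
  simp [QuaternionAlgebra.Basis.lift, QuaternionAlgebra.Basis.ofHamilton,
    Algebra.algebraMap_eq_smul_one, qRep]

theorem pRep_eq_comp_map_qRepAlgHom {m n : ℕ} (A : Matrix (Fin m) (Fin n) (Quaternion ℝ)) :
    pRep H J K A = Matrix.comp _ _ _ _ ℝ (A.map (qRepAlgHom hH hJ hK hHJK)) := by
  ext
  simp [pRep, qRepAlgHom_apply]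

end

theorem exists_fin_injective_span_eq {R V ι : Type*} [DivisionRing R] [AddCommGroup V]
    [Module R V] [Finite ι] (v : ι → V) :
    ∃ r : Fin (finrank R (span R (range v))) → ι, Injective r ∧
      span R (range (v ∘ r)) = span R (range v) := by
  obtain ⟨κ, a, ha, hspan, hli⟩ := exists_linearIndependent' R v
  have : Finite κ := Finite.of_injective a ha
  have : Fintype κ := Fintype.ofFinite κ
  have hcard : Fintype.card κ = finrank R (span R (range v)) := by
    rw [← hspan, finrank_span_eq_card hli]
  let e := (Fintype.equivFinOfCardEq hcard).symm
  refine ⟨a ∘ e, ha.comp e.injective, ?_⟩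
  rw [← comp_assoc, EquivLike.range_comp, hspan]

namespace AlgHom

variable {𝕜 D ι : Type*} [Field 𝕜] [DivisionRing D] [Algebra 𝕜 D] [Fintype ι] [DecidableEq ι]
  (f : D →ₐ[𝕜] Matrix ι ι 𝕜)

def vecMulLinear (v : ι → 𝕜) : D →ₗ[𝕜] ι → 𝕜 where
  toFun x := v ᵥ* f x
  map_add' x y := by rw [map_add, vecMul_add]
  map_smul' c x := by rw [map_smul, vecMul_smul]; rfl

theorem vecMulLinear_mul (v : ι → 𝕜) (x y : D) :
    f.vecMulLinear v (x * y) = f.vecMulLinear v x ᵥ* f y := by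
  simp [vecMulLinear, vecMul_vecMul]

theorem vecMulLinear_injective {v : ι → 𝕜} (hv : v ≠ 0) : Injective (f.vecMulLinear v) := by
  refine (injective_iff_map_eq_zero _).2 fun x hx => by_contra fun hx0 => hv ?_
  have h := congrArg (· ᵥ* f x⁻¹) hx
  simp only [zero_vecMul, ← f.vecMulLinear_mul, mul_inv_cancel₀ hx0] at h
  simpa [vecMulLinear] using h

noncomputable def transposeOp : Dᵐᵒᵖ →ₐ[𝕜] Matrix ι ι 𝕜 :=
  (transposeAlgEquiv ι 𝕜 𝕜).symm.toAlgHom.comp (AlgHom.op f)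

theorem transpose_comp_map {m n : Type*} (A : Matrix m n D) :
    (Matrix.comp m n ι ι 𝕜 (A.map f))ᵀ =
      Matrix.comp n m ι ι 𝕜 ((Aᵀ.map MulOpposite.op).map f.transposeOp) := by
  ext
  rfl

variable [FiniteDimensional 𝕜 D] (hι : Fintype.card ι = finrank 𝕜 D)
include hι

noncomputable def vecMulEquiv {v : ι → 𝕜} (hv : v ≠ 0) : D ≃ₗ[𝕜] ι → 𝕜 :=
  LinearMap.linearEquivOfInjective _ (f.vecMulLinear_injective hv) (by simp [hι])

noncomputable def blockVecMulEquiv {v : ι → 𝕜} (hv : v ≠ 0) (m : Type*) :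
    (m → D) ≃ₗ[𝕜] (m × ι → 𝕜) :=
  (LinearEquiv.piCongrRight fun _ => f.vecMulEquiv hι hv).trans (LinearEquiv.curry 𝕜 𝕜 m ι).symm

theorem blockVecMulEquiv_vecMul {v : ι → 𝕜} (hv : v ≠ 0) {m n : Type*} [Fintype m]
    (A : Matrix m n D) (y : m → D) :
    f.blockVecMulEquiv hι hv n (y ᵥ* A) =
      f.blockVecMulEquiv hι hv m y ᵥ* Matrix.comp m n ι ι 𝕜 (A.map f) := by
  ext ⟨t, j⟩
  simp [blockVecMulEquiv, vecMulEquiv, vecMul, dotProduct, Fintype.sum_prod_type, map_sum,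
    f.vecMulLinear_mul]

theorem rank_comp_map {m n : Type*} [Fintype m] [Fintype n] (A : Matrix m n D) :
    (Matrix.comp m n ι ι 𝕜 (A.map f)).rank = finrank 𝕜 D * finrank D (span D (range A.row)) := by
  obtain ⟨i⟩ : Nonempty ι := Fintype.card_pos_iff.1 (hι ▸ finrank_pos)
  have hv : (Pi.single i 1 : ι → 𝕜) ≠ 0 := by simp
  have hrange : LinearMap.range (Matrix.comp m n ι ι 𝕜 (A.map f)).vecMulLinear =
      (LinearMap.range (A.vecMulLinear.restrictScalars 𝕜)).map
        (f.blockVecMulEquiv hι hv n : (n → D) →ₗ[𝕜] n × ι → 𝕜) := by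
    rw [← LinearMap.range_comp_of_range_eq_top _ (f.blockVecMulEquiv hι hv m).range,
      ← LinearMap.range_comp]
    congr 1
    ext y : 1
    exact (f.blockVecMulEquiv_vecMul hι hv A y).symm
  rw [rank_eq_finrank_span_row, ← range_vecMulLinear, hrange, LinearEquiv.finrank_map_eq,
    LinearMap.range_restrictScalars, range_vecMulLinear]
  exact (finrank_mul_finrank 𝕜 D (span D (range A.row))).symm

variable {m n : Type*} [Fintype m] [Fintype n]

theorem exists_submatrix_rows_rank_comp_map_eq (A : Matrix m n D) {k : ℕ}
    (h : (Matrix.comp m n ι ι 𝕜 (A.map f)).rank = finrank 𝕜 D * k) :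
    ∃ r : Fin k → m, Injective r ∧
      (Matrix.comp _ n ι ι 𝕜 ((A.submatrix r id).map f)).rank = finrank 𝕜 D * k := by
  rw [f.rank_comp_map hι] at h
  obtain rfl := Nat.eq_of_mul_eq_mul_left finrank_pos h
  obtain ⟨r, hr, hspan⟩ := exists_fin_injective_span_eq (R := D) A.row
  refine ⟨r, hr, ?_⟩
  rw [f.rank_comp_map hι]
  exact congrArg (fun W : Submodule D (n → D) => finrank 𝕜 D * finrank D W) hspan

theorem exists_submatrix_cols_rank_comp_map_eq (A : Matrix m n D) {k : ℕ}
    (h : (Matrix.comp m n ι ι 𝕜 (A.map f)).rank = finrank 𝕜 D * k) :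
    ∃ c : Fin k → n, Injective c ∧
      (Matrix.comp m _ ι ι 𝕜 ((A.submatrix id c).map f)).rank = finrank 𝕜 D * k := by
  have hop : finrank 𝕜 Dᵐᵒᵖ = finrank 𝕜 D := (MulOpposite.opLinearEquiv 𝕜).symm.finrank_eq
  rw [← rank_transpose, f.transpose_comp_map, ← hop] at h
  obtain ⟨c, hc, hrank⟩ :=
    f.transposeOp.exists_submatrix_rows_rank_comp_map_eq (hι.trans hop.symm) _ h
  exact ⟨c, hc, by rwa [← rank_transpose, f.transpose_comp_map, ← hop]⟩

end AlgHom

theorem pRep_submatrix_rank_general (H J K : Matrix (Fin 4) (Fin 4) ℝ)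
    (hH : H * H = -1) (hJ : J * J = -1) (hK : K * K = -1)
    (hHJK : H * J * K = -1) {m n : ℕ}
    (A : Matrix (Fin m) (Fin m) (Quaternion ℝ))
    (hrank : (pRep H J K A).rank = 4 * n) :
    ∃ r c : Fin n → Fin m, Function.Injective r ∧ Function.Injective c ∧
      (pRep H J K (A.submatrix r c)).rank = 4 * n := by
  let f := qRepAlgHom hH hJ hK hHJK
  have hι : Fintype.card (Fin 4) = finrank ℝ (Quaternion ℝ) := by
    rw [Fintype.card_fin, Quaternion.finrank_eq_four]
  have h4 : 4 * n = finrank ℝ (Quaternion ℝ) * n := by rw [Quaternion.finrank_eq_four]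
  rw [pRep_eq_comp_map_qRepAlgHom hH hJ hK hHJK, h4] at hrank
  obtain ⟨c, hc, hAc⟩ := f.exists_submatrix_cols_rank_comp_map_eq hι A hrank
  obtain ⟨r, hr, hArc⟩ := f.exists_submatrix_rows_rank_comp_map_eq hι _ hAc
  refine ⟨r, c, hr, hc, ?_⟩
  rwa [submatrix_submatrix, ← h4, ← pRep_eq_comp_map_qRepAlgHom] at hArc

/-- Theorem 2.3: if `A ∈ ℍ^{m×m}` is nonzero and `rank P(A) = 4n`
with `1 ≤ n ≤ m`, then `A` has an `n × n` submatrix `B` with `rank P(B) = 4n`. -/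
theorem pRep_submatrix_rank (H J K : Matrix (Fin 4) (Fin 4) ℝ)
    (hH : H * H = -1) (hJ : J * J = -1) (hK : K * K = -1)
    (hHJK : H * J * K = -1) {m n : ℕ} (hn : 1 ≤ n) (hnm : n ≤ m)
    (A : Matrix (Fin m) (Fin m) (Quaternion ℝ)) (hA : A ≠ 0)
    (hrank : (pRep H J K A).rank = 4 * n) :
    ∃ r c : Fin n → Fin m, Function.Injective r ∧ Function.Injective c ∧
      (pRep H J K (A.submatrix r c)).rank = 4 * n :=
  pRep_submatrix_rank_general H J K hH hJ hK hHJK A hrank
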